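/- Let (u_n) ⊂ L^r(Ω) be a sequence converging to u in L^r(Ω), and let (v_n) be a bounded sequence in L^p(Ω; ℝ^N). Then ∫_Ω f(x, u_n(x), v_n(x)) (u_n(x) − u(x)) dx → 0 as n → ∞. -/

import Mathlib

/-!
Let `q = r / (r - 1)` be the conjugate exponent of `r`. The growth condition bounds the `L^q`-norm
of `x ↦ f(x, uₙ(x), vₙ(x))` by `|a₁| ‖vₙ‖_p^(p/q) + |a₂| ‖uₙ‖_r^(r/q) + ‖α₁‖_q`, which stays
bounded since `(vₙ)` is bounded in `L^p` and `(uₙ)` converges in `L^r`. By Hölder's inequality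
the integral is then at most a constant times `‖uₙ - u‖_r → 0`.
-/

open MeasureTheory Filter Topology
open scoped ENNReal NNReal

namespace MeasureTheory

variable {α : Type*} [MeasurableSpace α] {μ : Measure α}

/-- Off the null set where `f x` fails to be continuous, `f` agrees with a jointly measurable
function. -/
theorem AEStronglyMeasurable.caratheodory_comp {β γ : Type*} [TopologicalSpace β]
    [TopologicalSpace.MetrizableSpace β] [SecondCountableTopology β] [MeasurableSpace β]
    [BorelSpace β] [TopologicalSpace γ] [TopologicalSpace.PseudoMetrizableSpace γ] [Nonempty γ]
    {f : α → β → γ}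
    (hf_meas : ∀ y, StronglyMeasurable fun x => f x y) (hf_cont : ∀ᵐ x ∂μ, Continuous (f x))
    {g : α → β} (hg : AEStronglyMeasurable g μ) :
    AEStronglyMeasurable (fun x => f x (g x)) μ := by
  classical
  obtain ⟨t, hbad_sub, ht, ht_null⟩ :=
    exists_measurable_superset_of_null (ae_iff.1 hf_cont)
  let f' : β → α → γ := fun y x => if x ∈ t then Classical.arbitrary γ else f x y
  have hf'_cont : ∀ x, Continuous fun y => f' y x := by
    intro x
    by_cases hx : x ∈ t
    · simp only [f', if_pos hx, continuous_const]
    · simp only [f', if_neg hx]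
      by_contra hc
      exact hx (hbad_sub hc)
  have hf'_meas : ∀ y, StronglyMeasurable (f' y) := fun y =>
    StronglyMeasurable.ite ht stronglyMeasurable_const (hf_meas y)
  have hF' := stronglyMeasurable_uncurry_of_continuous_of_stronglyMeasurable hf'_cont hf'_meas
  refine ⟨fun x => Function.uncurry f' (hg.mk g x, x),
    hF'.comp_measurable (hg.stronglyMeasurable_mk.measurable.prodMk measurable_id), ?_⟩
  have ht_ae : ∀ᵐ x ∂μ, x ∉ t := measure_eq_zero_iff_ae_notMem.1 ht_null
  filter_upwards [hg.ae_eq_mk, ht_ae] with x hgx hxt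
  simp only [Function.uncurry, f', if_neg hxt, hgx]

theorem eLpNorm_norm_rpow_div {E : Type*} [NormedAddCommGroup E] (w : α → E) {s q : ℝ}
    (hs : 0 < s) (hq : 0 < q) :
    eLpNorm (fun x => ‖w x‖ ^ (s / q)) (.ofReal q) μ = eLpNorm w (.ofReal s) μ ^ (s / q) := by
  rw [eLpNorm_norm_rpow w (div_pos hs hq), ← ENNReal.ofReal_mul hq.le, mul_div_cancel₀ s hq.ne']

theorem eLpNorm_le_of_ae_norm_le_rpow_growth {E F G : Type*} [NormedAddCommGroup E]
    [NormedAddCommGroup F] [NormedAddCommGroup G] {p r q : ℝ} (hp : 0 < p) (hr : 0 < r)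
    (hq : 1 ≤ q) {g : α → G} {v : α → E} {u : α → F} {c : α → ℝ} {a b : ℝ}
    (hv : AEStronglyMeasurable v μ) (hu : AEStronglyMeasurable u μ)
    (hc : AEStronglyMeasurable c μ)
    (hg : ∀ᵐ x ∂μ, ‖g x‖ ≤ a * ‖v x‖ ^ (p / q) + b * ‖u x‖ ^ (r / q) + c x) :
    eLpNorm g (.ofReal q) μ ≤ ‖a‖ₑ * eLpNorm v (.ofReal p) μ ^ (p / q)
      + ‖b‖ₑ * eLpNorm u (.ofReal r) μ ^ (r / q) + eLpNorm c (.ofReal q) μ := by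
  have hq0 : 0 < q := by linarith
  have hQ : (1 : ℝ≥0∞) ≤ .ofReal q := ENNReal.one_le_ofReal.2 hq
  set V : α → ℝ := fun x => ‖v x‖ ^ (p / q)
  set U : α → ℝ := fun x => ‖u x‖ ^ (r / q)
  have hV : AEStronglyMeasurable (a • V) μ :=
    (hv.norm.aemeasurable.pow_const _).aestronglyMeasurable.const_smul a
  have hU : AEStronglyMeasurable (b • U) μ :=
    (hu.norm.aemeasurable.pow_const _).aestronglyMeasurable.const_smul b
  have hg' : ∀ᵐ x ∂μ, ‖g x‖ ≤ (a • V + b • U + fun x => ‖c x‖) x := by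
    filter_upwards [hg] with x hx
    simp only [Pi.add_apply, Pi.smul_apply, smul_eq_mul, Real.norm_eq_abs]
    linarith [le_abs_self (c x)]
  calc eLpNorm g (.ofReal q) μ
      ≤ eLpNorm (a • V + b • U + fun x => ‖c x‖) (.ofReal q) μ := eLpNorm_mono_ae_real hg'
    _ ≤ eLpNorm (a • V) (.ofReal q) μ + eLpNorm (b • U) (.ofReal q) μ
          + eLpNorm (fun x => ‖c x‖) (.ofReal q) μ :=
        (eLpNorm_add_le (hV.add hU) hc.norm hQ).trans
          (add_le_add_left (eLpNorm_add_le hV hU hQ) _)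
    _ = _ := by
        rw [eLpNorm_const_smul, eLpNorm_const_smul, eLpNorm_norm_rpow_div v hp hq0,
          eLpNorm_norm_rpow_div u hr hq0, eLpNorm_norm]

theorem tendsto_integral_mul_of_eLpNorm_le_of_tendsto_zero {ι : Type*} {l : Filter ι}
    {p q : ℝ≥0∞} [p.HolderConjugate q] {F g : ι → α → ℝ}
    (hF : ∀ i, AEStronglyMeasurable (F i) μ) (hg : ∀ i, AEStronglyMeasurable (g i) μ)
    {M : ℝ≥0∞} (hM : M ≠ ∞) (hFM : ∀ᶠ i in l, eLpNorm (F i) p μ ≤ M)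
    (hg0 : Tendsto (fun i => eLpNorm (g i) q μ) l (𝓝 0)) :
    Tendsto (fun i => ∫ x, F i x * g i x ∂μ) l (𝓝 0) := by
  have holder : ∀ i, ‖∫ x, F i x * g i x ∂μ‖ₑ ≤ eLpNorm (F i) p μ * eLpNorm (g i) q μ := by
    intro i
    calc ‖∫ x, F i x * g i x ∂μ‖ₑ ≤ eLpNorm (F i • g i) 1 μ := by
          rw [eLpNorm_one_eq_lintegral_enorm]
          exact enorm_integral_le_lintegral_enorm _
      _ ≤ _ := eLpNorm_smul_le_mul_eLpNorm (hg i) (hF i)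
  have hMg : Tendsto (fun i => M * eLpNorm (g i) q μ) l (𝓝 0) := by
    simpa using ENNReal.Tendsto.const_mul hg0 (Or.inr hM)
  refine tendsto_zero_iff_enorm_tendsto_zero.2 (tendsto_of_tendsto_of_tendsto_of_le_of_le'
    tendsto_const_nhds hMg (.of_forall fun _ => bot_le) ?_)
  filter_upwards [hFM] with i hi
  exact (holder i).trans (mul_le_mul_left hi _)

end MeasureTheory

theorem stmt_11_general {N : ℕ} (Ω : Set (EuclideanSpace ℝ (Fin N)))
    (p r : ℝ) (hp : 1 < p) (hr : 1 < r)
    (f : EuclideanSpace ℝ (Fin N) → ℝ → EuclideanSpace ℝ (Fin N) → ℝ)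
    (hfmeas : ∀ (s : ℝ) (ξ : EuclideanSpace ℝ (Fin N)), Measurable (fun x => f x s ξ))
    (hfcont : ∀ᵐ x ∂(volume.restrict Ω),
      Continuous (fun sξ : ℝ × EuclideanSpace ℝ (Fin N) => f x sξ.1 sξ.2))
    (a₁ a₂ : ℝ)
    (α₁ : EuclideanSpace ℝ (Fin N) → ℝ)
    (hα₁ : MemLp α₁ (ENNReal.ofReal (r / (r - 1))) (volume.restrict Ω))
    (hgrowth : ∀ᵐ x ∂(volume.restrict Ω), ∀ (s : ℝ) (ξ : EuclideanSpace ℝ (Fin N)),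
      |f x s ξ| ≤ a₁ * ‖ξ‖ ^ (p * (r - 1) / r) + a₂ * |s| ^ (r - 1) + α₁ x)
    (u : ℕ → EuclideanSpace ℝ (Fin N) → ℝ) (u₀ : EuclideanSpace ℝ (Fin N) → ℝ)
    (hu : ∀ n, MemLp (u n) (ENNReal.ofReal r) (volume.restrict Ω))
    (hu₀ : MemLp u₀ (ENNReal.ofReal r) (volume.restrict Ω))
    (huconv : Tendsto (fun n => eLpNorm (u n - u₀) (ENNReal.ofReal r) (volume.restrict Ω))
      atTop (nhds 0))
    (v : ℕ → EuclideanSpace ℝ (Fin N) → EuclideanSpace ℝ (Fin N))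
    (hv : ∀ n, MemLp (v n) (ENNReal.ofReal p) (volume.restrict Ω))
    (hvbdd : ∃ C : ℝ≥0, ∀ n, eLpNorm (v n) (ENNReal.ofReal p) (volume.restrict Ω) ≤ C) :
    Tendsto (fun n => ∫ x in Ω, f x (u n x) (v n x) * (u n x - u₀ x)) atTop (nhds 0) := by
  set μ := volume.restrict Ω
  set q := r / (r - 1)
  have hrq : r.HolderConjugate q := .conjExponent hr
  have hqr : (ENNReal.ofReal q).HolderConjugate (.ofReal r) := hrq.ennrealOfReal.symm
  obtain ⟨C, hC⟩ := hvbdd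
  have hF : ∀ n, AEStronglyMeasurable (fun x => f x (u n x) (v n x)) μ := fun n =>
    AEStronglyMeasurable.caratheodory_comp (f := fun x sξ => f x sξ.1 sξ.2)
      (fun sξ => (hfmeas sξ.1 sξ.2).stronglyMeasurable) hfcont ((hu n).1.prodMk (hv n).1)
  have hexp_v : p / q = p * (r - 1) / r := div_div_eq_mul_div p r (r - 1)
  have hexp_u : r / q = r - 1 := hrq.div_conj_eq_sub_one
  have hgrowth' : ∀ n, ∀ᵐ x ∂μ, ‖f x (u n x) (v n x)‖
      ≤ a₁ * ‖v n x‖ ^ (p / q) + a₂ * ‖u n x‖ ^ (r / q) + α₁ x := by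
    intro n
    filter_upwards [hgrowth] with x hx
    rw [hexp_v, hexp_u, Real.norm_eq_abs, Real.norm_eq_abs]
    exact hx _ _
  have hbound : ∀ᶠ n in atTop, eLpNorm (fun x => f x (u n x) (v n x)) (.ofReal q) μ
      ≤ ‖a₁‖ₑ * C ^ (p / q) + ‖a₂‖ₑ * (1 + eLpNorm u₀ (.ofReal r) μ) ^ (r / q)
        + eLpNorm α₁ (.ofReal q) μ := by
    filter_upwards [huconv.eventually (ge_mem_nhds zero_lt_one)] with n hn
    have hun : eLpNorm (u n) (.ofReal r) μ ≤ 1 + eLpNorm u₀ (.ofReal r) μ := by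
      refine le_trans ?_ (add_le_add_left hn _)
      simpa using eLpNorm_add_le ((hu n).sub hu₀).1 hu₀.1 (ENNReal.one_le_ofReal.2 hr.le)
    refine (eLpNorm_le_of_ae_norm_le_rpow_growth (by linarith) hrq.pos hrq.symm.lt.le
      (hv n).1 (hu n).1 hα₁.1 (hgrowth' n)).trans ?_
    gcongr
    exact hC n
  exact tendsto_integral_mul_of_eLpNorm_le_of_tendsto_zero hF (fun n => ((hu n).sub hu₀).1)
    (by finiteness) hbound huconv

theorem stmt_11 {N : ℕ} (hN : 1 ≤ N) (Ω : Set (EuclideanSpace ℝ (Fin N)))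
    (hΩo : IsOpen Ω) (hΩb : Bornology.IsBounded Ω)
    (p r : ℝ) (hp : 1 < p) (hr : 1 < r)
    (f : EuclideanSpace ℝ (Fin N) → ℝ → EuclideanSpace ℝ (Fin N) → ℝ)
    (hfmeas : ∀ (s : ℝ) (ξ : EuclideanSpace ℝ (Fin N)), Measurable (fun x => f x s ξ))
    (hfcont : ∀ᵐ x ∂(volume.restrict Ω),
      Continuous (fun sξ : ℝ × EuclideanSpace ℝ (Fin N) => f x sξ.1 sξ.2))
    (a₁ a₂ : ℝ) (ha₁ : 0 ≤ a₁) (ha₂ : 0 ≤ a₂)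
    (α₁ : EuclideanSpace ℝ (Fin N) → ℝ)
    (hα₁ : MemLp α₁ (ENNReal.ofReal (r / (r - 1))) (volume.restrict Ω))
    (hgrowth : ∀ᵐ x ∂(volume.restrict Ω), ∀ (s : ℝ) (ξ : EuclideanSpace ℝ (Fin N)),
      |f x s ξ| ≤ a₁ * ‖ξ‖ ^ (p * (r - 1) / r) + a₂ * |s| ^ (r - 1) + α₁ x)
    (u : ℕ → EuclideanSpace ℝ (Fin N) → ℝ) (u₀ : EuclideanSpace ℝ (Fin N) → ℝ)
    (hu : ∀ n, MemLp (u n) (ENNReal.ofReal r) (volume.restrict Ω))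
    (hu₀ : MemLp u₀ (ENNReal.ofReal r) (volume.restrict Ω))
    (huconv : Tendsto (fun n => eLpNorm (u n - u₀) (ENNReal.ofReal r) (volume.restrict Ω))
      atTop (nhds 0))
    (v : ℕ → EuclideanSpace ℝ (Fin N) → EuclideanSpace ℝ (Fin N))
    (hv : ∀ n, MemLp (v n) (ENNReal.ofReal p) (volume.restrict Ω))
    (hvbdd : ∃ C : ℝ≥0, ∀ n, eLpNorm (v n) (ENNReal.ofReal p) (volume.restrict Ω) ≤ C) :
    Tendsto (fun n => ∫ x in Ω, f x (u n x) (v n x) * (u n x - u₀ x)) atTop (nhds 0) :=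
  stmt_11_general Ω p r hp hr f hfmeas hfcont a₁ a₂ α₁ hα₁ hgrowth u u₀ hu hu₀ huconv v hv hvbdd
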